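/- The scalar delay equation ẋ(t) = −a·x(t−h) with a > 0 and h ≥ 0 is exponentially stable if and only if a·h < π/2; equivalently, every root s of the characteristic equation s + a·e^{-sh} = 0 has negative real part if and only if ah < π/2. -/

import Mathlib

open Complex Real

/-!
A root `s = σ + iω` of `s + a e^{-sh}` with `σ ≥ 0` has `|s| = a e^{-σh} ≤ a`, hence `|ωh| ≤ ah`.
If `ah < π/2` then `cos (ωh) > 0`, and the real part `σ = -a e^{-σh} cos (ωh)` is negative.

Conversely, the substitution `z = sh` turns the equation into `z + k e^{-z} = 0` with `k = ah`.
For `z = x + iθ` with `sin θ ≠ 0`, its real and imaginary parts amount to `x = -θ cot θ` and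
`θ e^x / sin θ = k`. On `[π/2, π)` this forces `x ≥ 0`; the left-hand side is
continuous there, equals `π/2` at `θ = π/2` and is at least `k` at `θ = π - π/(2k)`, where
`sin θ ≤ π/(2k)`. The intermediate value theorem thus gives a root with `Re z ≥ 0` whenever
`k ≥ π/2`.
-/

theorem re_lt_zero_of_add_mul_exp_eq_zero {a h : ℝ} (ha : 0 < a) (hh : 0 ≤ h)
    (hah : a * h < π / 2) {s : ℂ} (hs : s + a * Complex.exp (-s * h) = 0) : s.re < 0 := by
  by_contra! hre
  have hs' : s = -(a * Complex.exp (-s * h)) := eq_neg_of_add_eq_zero_left hs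
  have hexp_le : Real.exp (-s.re * h) ≤ 1 := Real.exp_le_one_iff.mpr (by nlinarith)
  have hnorm : ‖s‖ ≤ a := by
    rw [hs', norm_neg, norm_mul, Complex.norm_exp, Complex.norm_real, Real.norm_of_nonneg ha.le]
    simpa using mul_le_of_le_one_right ha.le hexp_le
  have him : |s.im * h| < π / 2 := by
    rw [abs_mul, abs_of_nonneg hh]
    calc |s.im| * h ≤ a * h := by gcongr; exact (abs_im_le_norm s).trans hnorm
      _ < π / 2 := hah
  have hcos : 0 < Real.cos (s.im * h) := Real.cos_pos_of_mem_Ioo (abs_lt.mp him)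
  have hre_eq : s.re = -(a * (Real.exp (-s.re * h) * Real.cos (s.im * h))) := by
    have := congrArg Complex.re hs'
    simpa [Complex.exp_re, Complex.mul_re] using this
  have : 0 < a * (Real.exp (-s.re * h) * Real.cos (s.im * h)) := by positivity
  linarith

theorem add_mul_exp_neg_eq_zero_of_mul_sin_eq {x θ : ℝ} (hθ : Real.sin θ ≠ 0)
    (hx : x * Real.sin θ = -(θ * Real.cos θ)) :
    (x + θ * I) + ↑(θ * Real.exp x / Real.sin θ) * Complex.exp (-(x + θ * I)) = 0 := by
  have hexp : Complex.exp (-(x + θ * I)) = ↑(Real.exp (-x)) * (Real.cos θ - Real.sin θ * I) := by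
    rw [neg_add, Complex.exp_add, ← Complex.ofReal_neg, ← Complex.ofReal_exp, ← neg_mul,
      Complex.exp_mul_I, Complex.cos_neg, Complex.sin_neg, ← Complex.ofReal_cos,
      ← Complex.ofReal_sin]
    ring
  have hcoef : θ * Real.exp x / Real.sin θ * Real.exp (-x) = θ / Real.sin θ := by
    rw [div_mul_eq_mul_div, mul_assoc, ← Real.exp_add, add_neg_cancel, Real.exp_zero, mul_one]
  have hre : x + θ / Real.sin θ * Real.cos θ = 0 := by field_simp; linarith
  have him : θ - θ / Real.sin θ * Real.sin θ = 0 := by field_simp; ring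
  calc _ = ↑(x + θ / Real.sin θ * Real.cos θ) + ↑(θ - θ / Real.sin θ * Real.sin θ) * I := by
          rw [hexp, ← mul_assoc, ← Complex.ofReal_mul, hcoef]; push_cast; ring
    _ = 0 := by rw [hre, him]; simp

theorem exists_mul_exp_div_sin_eq {k : ℝ} (hk : π / 2 ≤ k) :
    ∃ θ, π / 2 ≤ θ ∧ θ < π ∧
      θ * Real.exp (-(θ * Real.cos θ / Real.sin θ)) / Real.sin θ = k := by
  set g : ℝ → ℝ := fun θ ↦ θ * Real.exp (-(θ * Real.cos θ / Real.sin θ)) / Real.sin θ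
  have hk1 : 1 < k := lt_of_lt_of_le (by linarith [Real.pi_gt_three]) hk
  set ε := π / (2 * k)
  have hε : 0 < ε := by positivity
  have hεk : ε * k = π / 2 := by simp only [ε]; field_simp
  have hε_lt : ε < π / 2 := by nlinarith [Real.pi_pos]
  have hsin_pos : ∀ θ ∈ Set.Icc (π / 2) (π - ε), 0 < Real.sin θ := fun θ hθ ↦
    Real.sin_pos_of_pos_of_lt_pi (by linarith [hθ.1, Real.pi_pos]) (by linarith [hθ.2])
  have hcont : ContinuousOn g (Set.Icc (π / 2) (π - ε)) := by
    have hsin_ne : ∀ θ ∈ Set.Icc (π / 2) (π - ε), Real.sin θ ≠ 0 := fun θ hθ ↦ (hsin_pos θ hθ).ne'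
    fun_prop (disch := assumption)
  have hg_left : g (π / 2) = π / 2 := by simp [g]
  have hg_right : k ≤ g (π - ε) := by
    have hs : 0 < Real.sin (π - ε) := hsin_pos _ ⟨by linarith, le_rfl⟩
    have hsε : Real.sin (π - ε) ≤ ε := by rw [Real.sin_pi_sub]; exact Real.sin_le hε.le
    have hexp : 1 ≤ Real.exp (-((π - ε) * Real.cos (π - ε) / Real.sin (π - ε))) := by
      have hcos : 0 < Real.cos ε := Real.cos_pos_of_mem_Ioo ⟨by linarith, hε_lt⟩
      rw [Real.one_le_exp_iff, Real.cos_pi_sub, mul_neg, neg_div, neg_neg]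
      exact div_nonneg (mul_nonneg (by linarith) hcos.le) hs.le
    calc k = (π / 2) / ε := by field_simp; linarith
      _ ≤ (π - ε) / Real.sin (π - ε) := by gcongr <;> linarith
      _ ≤ g (π - ε) := by
        simp only [g]; gcongr; exact le_mul_of_one_le_right (by linarith) hexp
  obtain ⟨θ, hθ, hgθ⟩ :=
    intermediate_value_Icc (by linarith) hcont ⟨by rw [hg_left]; exact hk, hg_right⟩
  exact ⟨θ, hθ.1, by linarith [hθ.2], hgθ⟩

theorem exists_re_nonneg_add_mul_exp_neg_eq_zero {k : ℝ} (hk : π / 2 ≤ k) :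
    ∃ z : ℂ, 0 ≤ z.re ∧ z + k * Complex.exp (-z) = 0 := by
  obtain ⟨θ, hθ_ge, hθ_lt, hθk⟩ := exists_mul_exp_div_sin_eq hk
  have hsin : 0 < Real.sin θ :=
    Real.sin_pos_of_pos_of_lt_pi (by linarith [Real.pi_pos]) hθ_lt
  have hcos : Real.cos θ ≤ 0 := Real.cos_nonpos_of_pi_div_two_le_of_le hθ_ge (by linarith)
  set x := -(θ * Real.cos θ / Real.sin θ)
  have hx : x * Real.sin θ = -(θ * Real.cos θ) := by simp only [x]; field_simp
  refine ⟨x + θ * I, ?_, hθk ▸ add_mul_exp_neg_eq_zero_of_mul_sin_eq hsin.ne' hx⟩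
  have : 0 ≤ x := neg_nonneg.mpr <|
    div_nonpos_of_nonpos_of_nonneg (mul_nonpos_of_nonneg_of_nonpos (by linarith) hcos) hsin.le
  simpa using this

/-- The scalar delay equation `ẋ(t) = −a x(t−h)` with `a > 0`, `h ≥ 0` is exponentially
stable iff `a h < π/2`: every root of the characteristic equation `s + a e^{-s h} = 0`
has negative real part if and only if `a h < π/2`. -/
theorem scalar_delay_stability_iff (a h : ℝ) (ha : 0 < a) (hh : 0 ≤ h) :
    (∀ s : ℂ, s + (a : ℂ) * Complex.exp (-s * h) = 0 → s.re < 0) ↔ a * h < π / 2 := by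
  refine ⟨fun hstable ↦ ?_, fun hah s hs ↦ re_lt_zero_of_add_mul_exp_eq_zero ha hh hah hs⟩
  by_contra! hah
  have hh_pos : 0 < h := (pos_iff_pos_of_mul_pos (by linarith [Real.pi_pos])).mp ha
  obtain ⟨z, hz_re, hz⟩ := exists_re_nonneg_add_mul_exp_neg_eq_zero hah
  have hroot : z / h + a * Complex.exp (-(z / h) * h) = 0 := by
    have hh' : (h : ℂ) ≠ 0 := by exact_mod_cast hh_pos.ne'
    calc z / h + a * Complex.exp (-(z / h) * h) = (z + ↑(a * h) * Complex.exp (-z)) / h := by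
          rw [neg_mul, div_mul_cancel₀ z hh']; push_cast; field_simp
      _ = 0 := by rw [hz, zero_div]
  have := hstable _ hroot
  rw [Complex.div_ofReal_re] at this
  exact this.not_ge (div_nonneg hz_re hh)
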